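/- arXiv:1411.1683 — 2 statements merged into one kernel-verified Lean document; each statement's English description precedes it below -/
import Mathlib

section
/- In the setting of canonical extension, the second fundamental form of H·M satisfies: II_{H·M}(X,Y) = II_M(X,Y) for X, Y ∈ T_pM; II_{H·M}(U,V) = (II_{H·p}(U,V))^⊥ for U, V ∈ T_p(H·p); and II_{H·M}(X,U) = 0 for X ∈ T_pM, U ∈ T_p(H·p), at each p ∈ M. -/
/-!
Everything happens pointwise in the tangent space at `p ∈ M`, which splits orthogonally as
`T_pΣ ⊕ T_p(H·p)`, with `T_pM ≤ T_pΣ`; the normal space of `H·M` is then the orthogonal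
complement of `T_pM` inside `T_pΣ`. Since `Σ` is totally geodesic, `∇_X Y` stays in `T_pΣ` and
`∇_X U` stays in `T_p(H·p)`; projecting the former onto the normal space of `H·M` is the same as
projecting it onto that of `M`, and the latter is tangent to `H·M`. For two orbit directions,
projecting first onto the normal space of the orbit only discards a tangent component of `H·M`.
-/

namespace Submodule

variable {𝕜 E : Type*} [RCLike 𝕜] [NormedAddCommGroup E] [InnerProductSpace 𝕜 E]

theorem starProjection_orthogonal_eq_of_sub_mem (K : Submodule 𝕜 E) [K.HasOrthogonalProjection]
    {v w : E} (h : v - w ∈ K) : Kᗮ.starProjection v = Kᗮ.starProjection w := by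
  rw [← sub_eq_zero, ← map_sub]
  exact starProjection_orthogonal_apply_eq_zero h

theorem starProjection_sup_orthogonal_starProjection_orthogonal (K L : Submodule 𝕜 E)
    [L.HasOrthogonalProjection] [(K ⊔ L).HasOrthogonalProjection] (v : E) :
    (K ⊔ L)ᗮ.starProjection (Lᗮ.starProjection v) = (K ⊔ L)ᗮ.starProjection v := by
  refine (starProjection_orthogonal_eq_of_sub_mem _ ?_).symm
  rw [starProjection_orthogonal_val, sub_sub_cancel]
  exact mem_sup_right (coe_mem _)

theorem starProjection_sup_orthogonal_orthogonal_of_mem {K S : Submodule 𝕜 E}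
    [K.HasOrthogonalProjection] [(K ⊔ Sᗮ)ᗮ.HasOrthogonalProjection] (hKS : K ≤ S) {v : E}
    (hv : v ∈ S) : (K ⊔ Sᗮ)ᗮ.starProjection v = Kᗮ.starProjection v := by
  have hS : Kᗮ.starProjection v ∈ S := by
    rw [starProjection_orthogonal_val]
    exact S.sub_mem hv (hKS (coe_mem _))
  refine eq_starProjection_of_mem_orthogonal ?_ ?_
  · rw [← inf_orthogonal]
    exact ⟨coe_mem _, S.le_orthogonal_orthogonal hS⟩
  · rw [starProjection_orthogonal_val, sub_sub_cancel]
    exact le_orthogonal_orthogonal _ (mem_sup_left (coe_mem _))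

end Submodule

/-- the second fundamental form of the canonical extension `H·M`
satisfies, at every `p ∈ M`:
`II_{H·M}(X,Y) = II_M(X,Y)` for `X, Y` tangent to `M`;
`II_{H·M}(U,W) = (II_{H·p}(U,W))^⊥` for `U, W` tangent to the orbit `H·p`;
`II_{H·M}(X,U) = 0` in the mixed case.

Abstract model: points `P`, tangent spaces inside a fixed finite-dimensional inner
product space `V`, ambient covariant derivative `conn` of vector fields; `Σ` is
totally geodesic with tangent distribution `TS`, the orbits meet `Σ` orthogonally
and complementarily (`Torb p = (TS p)ᗮ`), `M ⊆ Σ` has tangent distribution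
`TM ≤ TS`, and the tangent space of `H·M` at `p ∈ M` is `TM p ⊔ Torb p`.  The
second fundamental form of a submanifold with tangent distribution `T` is
`(X,Y) ↦ ((conn X Y p))^⊥`, the projection onto `(T p)ᗮ`. -/
theorem second_fundamental_form_of_canonical_extension
    {P V : Type*} [NormedAddCommGroup V] [InnerProductSpace ℝ V] [FiniteDimensional ℝ V]
    (conn : (P → V) → (P → V) → (P → V))
    (Sset : Set P) (TS Torb : P → Submodule ℝ V)
    (h_polar : ∀ p ∈ Sset, Torb p = (TS p)ᗮ)
    -- `Σ` is totally geodesic: second fundamental form and shape operator vanish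
    (h_tot_geod : ∀ X Y : P → V, (∀ p ∈ Sset, X p ∈ TS p) → (∀ p ∈ Sset, Y p ∈ TS p) →
      ∀ p ∈ Sset, conn X Y p ∈ TS p)
    (h_shape : ∀ X U : P → V, (∀ p ∈ Sset, X p ∈ TS p) → (∀ p ∈ Sset, U p ∈ (TS p)ᗮ) →
      ∀ p ∈ Sset, conn X U p ∈ (TS p)ᗮ)
    (Mset : Set P) (hMS : Mset ⊆ Sset)
    (TM : P → Submodule ℝ V) (hTMS : ∀ p ∈ Mset, TM p ≤ TS p) :
    -- (1) `II_{H·M}(X,Y) = II_M(X,Y)` for `X, Y` tangent to `M`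
    (∀ X Y : P → V,
      (∀ p ∈ Mset, X p ∈ TM p) → (∀ p ∈ Mset, Y p ∈ TM p) →
      (∀ p ∈ Sset, X p ∈ TS p) → (∀ p ∈ Sset, Y p ∈ TS p) →
      ∀ p ∈ Mset,
        ((Submodule.orthogonalProjectionOnto (TM p ⊔ Torb p)ᗮ (conn X Y p) : (TM p ⊔ Torb p)ᗮ) : V) =
        ((Submodule.orthogonalProjectionOnto (TM p)ᗮ (conn X Y p) : (TM p)ᗮ) : V)) ∧
    -- (2) `II_{H·M}(U,W) = (II_{H·p}(U,W))^⊥` for `U, W` tangent to the orbits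
    (∀ U W : P → V,
      (∀ p ∈ Mset, U p ∈ Torb p) → (∀ p ∈ Mset, W p ∈ Torb p) →
      ∀ p ∈ Mset,
        ((Submodule.orthogonalProjectionOnto (TM p ⊔ Torb p)ᗮ (conn U W p) : (TM p ⊔ Torb p)ᗮ) : V) =
        ((Submodule.orthogonalProjectionOnto (TM p ⊔ Torb p)ᗮ
          ((Submodule.orthogonalProjectionOnto (Torb p)ᗮ (conn U W p) : (Torb p)ᗮ) : V) : (TM p ⊔ Torb p)ᗮ) : V)) ∧
    -- (3) `II_{H·M}(X,U) = 0` in the mixed case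
    (∀ X U : P → V,
      (∀ p ∈ Mset, X p ∈ TM p) → (∀ p ∈ Sset, X p ∈ TS p) →
      (∀ p ∈ Sset, U p ∈ (TS p)ᗮ) →
      ∀ p ∈ Mset,
        ((Submodule.orthogonalProjectionOnto (TM p ⊔ Torb p)ᗮ (conn X U p) : (TM p ⊔ Torb p)ᗮ) : V) = 0) := by
  refine ⟨?_, ?_, ?_⟩
  · intro X Y _ _ hXS hYS p hp
    rw [h_polar p (hMS hp)]
    exact Submodule.starProjection_sup_orthogonal_orthogonal_of_mem (hTMS p hp)
      (h_tot_geod X Y hXS hYS p (hMS hp))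
  · intro U W _ _ p _
    exact (Submodule.starProjection_sup_orthogonal_starProjection_orthogonal _ _ _).symm
  · intro X U _ hXS hUS p hp
    have hXU : conn X U p ∈ Torb p := h_polar p (hMS hp) ▸ h_shape X U hXS hUS p (hMS hp)
    exact Submodule.starProjection_orthogonal_apply_eq_zero (Submodule.mem_sup_right hXU)
end

section
/- In the canonical extension setting, if Σ' ⊂ Σ is a totally geodesic submanifold of M̄ through p ∈ M intersecting M orthogonally with dim Σ' = codim_Σ M, then for each h ∈ H, h(Σ') is a totally geodesic submanifold through h(p) intersecting H·M orthogonally with dim h(Σ') = codim_{M̄}(H·M). Hence if M admits sections in Σ, then H·M admits sections in M̄. -/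
/-!
An isometry `h` carries a section `Σ'` of `M` at `p` to a totally geodesic `h(Σ')` through
`h(p)` with tangent space `dh(T_pΣ')`, so everything reduces to linear algebra at `p`. There
`T_p(H·M) = T_pM ⊕ (T_pΣ)ᗮ` by polarity, whose orthogonal complement is `(T_pM)ᗮ ∩ T_pΣ`; this
contains `T_pΣ'` and has dimension `dim Σ - dim M = dim M̄ - dim H·M`, and `dh` preserves both
orthogonality and dimension.
-/

open Module

namespace Submodule

variable {𝕜 E : Type*} [RCLike 𝕜] [NormedAddCommGroup E] [InnerProductSpace 𝕜 E]

theorem orthogonal_sup_orthogonal (K T : Submodule 𝕜 E) [T.HasOrthogonalProjection] :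
    (K ⊔ Tᗮ)ᗮ = Kᗮ ⊓ T := by
  rw [← inf_orthogonal, orthogonal_orthogonal]

theorem finrank_sub_finrank_sup_orthogonal [FiniteDimensional 𝕜 E] {K T : Submodule 𝕜 E}
    (h : K ≤ T) :
    finrank 𝕜 E - finrank 𝕜 (K ⊔ Tᗮ : Submodule 𝕜 E) = finrank 𝕜 T - finrank 𝕜 K := by
  have hsup := finrank_add_finrank_orthogonal (K ⊔ Tᗮ)
  have hinf := finrank_add_inf_finrank_orthogonal h
  rw [orthogonal_sup_orthogonal] at hsup
  omega

end Submodule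

/-- Abstract model: points `P`, tangent vectors in a fixed finite-dimensional inner
product space `V`; `TotGeod S` means `S` is a totally geodesic submanifold of
`M̄`, and `TangentAt S q W` means the submanifold `S` has tangent space `W` at
`q`; both notions are preserved by the isometric `G`-action (differentials
`dg g p : V ≃ₗᵢ V`). -/
theorem canonical_extension_admits_sections
    {G P V : Type*} [Group G] [MulAction G P]
    [NormedAddCommGroup V] [InnerProductSpace ℝ V] [FiniteDimensional ℝ V]
    (dg : G → P → (V ≃ₗᵢ[ℝ] V))
    (TotGeod : Set P → Prop)
    (TangentAt : Set P → P → Submodule ℝ V → Prop)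
    -- isometries preserve total geodesy and tangent spaces
    (h_totgeod_equiv : ∀ (g : G) (S : Set P), TotGeod S → TotGeod ((g • ·) '' S))
    (h_tangent_equiv : ∀ (g : G) (S : Set P) (q : P) (W : Submodule ℝ V),
      TangentAt S q W →
      TangentAt ((g • ·) '' S) (g • q) (W.map (dg g q).toLinearEquiv.toLinearMap))
    -- the polar setting: section `Σ`, orbit tangent spaces, `M ⊆ Σ`, `H·M`
    (Sset : Set P) (TS Torb : P → Submodule ℝ V)
    (h_polar : ∀ p ∈ Sset, Torb p = (TS p)ᗮ)
    (Mset : Set P) (hMS : Mset ⊆ Sset)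
    (TM THM : P → Submodule ℝ V) (hTMS : ∀ p ∈ Mset, TM p ≤ TS p)
    (h_THM : ∀ (g : G), ∀ p ∈ Mset,
      THM (g • p) = (TM p ⊔ Torb p).map (dg g p).toLinearEquiv.toLinearMap)
    -- `M` admits sections in `Σ`: through each `p ∈ M` there is a totally
    -- geodesic `Σ' ⊆ Σ` meeting `M` orthogonally, of dimension `codim_Σ M`
    (h_sections : ∀ p ∈ Mset, ∃ (S' : Set P) (W : Submodule ℝ V),
      S' ⊆ Sset ∧ TotGeod S' ∧ p ∈ S' ∧ TangentAt S' p W ∧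
      W ≤ (TM p)ᗮ ⊓ TS p ∧
      finrank ℝ W = finrank ℝ (TS p) - finrank ℝ (TM p)) :
    -- `H·M` admits sections in `M̄`: through each point `h(p)` of `H·M` there is
    -- a totally geodesic submanifold (namely `h(Σ')`) meeting `H·M` orthogonally,
    -- of dimension `codim_{M̄}(H·M)`
    ∀ (g : G), ∀ p ∈ Mset, ∃ (S'' : Set P) (W' : Submodule ℝ V),
      TotGeod S'' ∧ g • p ∈ S'' ∧ TangentAt S'' (g • p) W' ∧
      W' ≤ (THM (g • p))ᗮ ∧
      finrank ℝ W' = finrank ℝ V - finrank ℝ (THM (g • p)) := by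
  intro g p hp
  obtain ⟨S', W, -, hS'geod, hpS', htan, horth, hrank⟩ := h_sections p hp
  have hTorb := h_polar p (hMS hp)
  refine ⟨(g • ·) '' S', W.map (dg g p).toLinearEquiv.toLinearMap,
    h_totgeod_equiv g S' hS'geod, Set.mem_image_of_mem _ hpS', h_tangent_equiv g S' p W htan,
    ?_, ?_⟩
  · rw [h_THM g p hp, ← Submodule.map_orthogonal_equiv, hTorb,
      Submodule.orthogonal_sup_orthogonal]
    exact Submodule.map_mono horth
  · rw [h_THM g p hp, LinearEquiv.finrank_map_eq, LinearEquiv.finrank_map_eq, hrank, hTorb,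
      Submodule.finrank_sub_finrank_sup_orthogonal (hTMS p hp)]
end
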